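/- A maximal monotone multifunction T : X →→ X* is regular if D_{T^ε} = D_T for all ε > 0. (Key step: if (z, z*) is monotonically related to T + ∂g_{λ,x}, then z* ∈ T^λ(z), hence z ∈ D_{T^λ} = D_T.) -/

import Mathlib

/-!
Let `z* ∈ T^r(z)` with `r = L(z, z*, T) < ∞`. It suffices to find `g ∈ X*` with `‖g‖ ≤ r` and
`g(z - y) ≤ ⟨z* - y*, z - y⟩` on `G(T)`: maximality then puts `z* - g` in `T(z)`. By Hahn–Banach,
dominating `g` by the infimal convolution of `r‖·‖` with the cone `S ⊆ X × ℝ` generated by the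
pairs `(z - y, ⟨z* - y*, z - y⟩)`, such a `g` exists as soon as `S` lies above `-r‖·‖`.

After normalising, this says `⟨z* - w, z - m⟩ + C ≥ -r‖z - m‖` for every convex combination
`(m, w)` of graph points, where `w ∈ T_C(m)`. The pair `(1 - s)(z, z*) + s(m, w) =: (p, v)` obeys an
affine lower bound `-δ‖p - y‖ - c` against `G(T)`. Were there no `(u, u*) ∈ G(T)` with
`‖u - p‖ ≤ ρ` and `⟨u*, u - p⟩ ≤ 0`, that bound would give `v ∈ T^ε(p)` for large `ε`, and
`D_{T^ε} = D_T` would produce such a graph point at `p` itself. Testing `(u, u*)`, with `ρ = s²`,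
against both `(z, z*)` and `(m, w)` and letting `s → 0` gives the inequality.
-/

open scoped ENNReal
open NormedSpace Pointwise

variable {X : Type*} [NormedAddCommGroup X] [NormedSpace ℝ X] [CompleteSpace X]

/-- `T` is a monotone multifunction. -/
def IsMonotoneOp (T : X → Set (StrongDual ℝ X)) : Prop :=
  ∀ ⦃x xs y ys⦄, xs ∈ T x → ys ∈ T y → 0 ≤ (xs - ys) (x - y)

/-- `T` is a maximal monotone multifunction. -/
def IsMaxMonotoneOp (T : X → Set (StrongDual ℝ X)) : Prop :=
  IsMonotoneOp T ∧ ∀ x xs, (∀ y ys, ys ∈ T y → 0 ≤ (xs - ys) (x - y)) → xs ∈ T x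

/-- L(x, x*, T). -/
noncomputable def Lnum (T : X → Set (StrongDual ℝ X)) (x : X) (xs : StrongDual ℝ X) : ℝ≥0∞ :=
  ⨆ (y : X) (ys : StrongDual ℝ X) (_ : ys ∈ T y) (_ : y ≠ x),
    ENNReal.ofReal ((xs - ys) (y - x) / ‖x - y‖)

/-- d(x*, T(x)). -/
noncomputable def dnum (T : X → Set (StrongDual ℝ X)) (x : X) (xs : StrongDual ℝ X) : ℝ≥0∞ :=
  ⨅ (ys : StrongDual ℝ X) (_ : ys ∈ T x), ENNReal.ofReal ‖ys - xs‖

def IsRegularOp (T : X → Set (StrongDual ℝ X)) : Prop :=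
  ∀ x xs, Lnum T x xs = dnum T x xs

def subdiff (f : X → ℝ) (z : X) : Set (StrongDual ℝ X) :=
  {zs | ∀ w, f z + zs (w - z) ≤ f w}

/-- T^ε enlargement. -/
def Te (T : X → Set (StrongDual ℝ X)) (ε : ℝ) (x : X) : Set (StrongDual ℝ X) :=
  {xs | ∀ y ys, ys ∈ T y → -(ε * ‖x - y‖) ≤ (xs - ys) (x - y)}

/-- T_ε enlargement. -/
def Tlow (T : X → Set (StrongDual ℝ X)) (ε : ℝ) (x : X) : Set (StrongDual ℝ X) :=
  {xs | ∀ y ys, ys ∈ T y → -ε ≤ (xs - ys) (x - y)}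

section ConeInfConv

variable {E : Type*} [NormedAddCommGroup E] [NormedSpace ℝ E] {μ : ℝ}
  {S : PointedCone ℝ (E × ℝ)}

noncomputable def coneInfConv (μ : ℝ) (S : PointedCone ℝ (E × ℝ)) (v : E) : ℝ :=
  ⨅ q : S, μ * ‖v - (q : E × ℝ).1‖ + (q : E × ℝ).2

variable (hμ : 0 ≤ μ) (hS : ∀ q ∈ S, -(μ * ‖q.1‖) ≤ q.2)
include hμ hS

lemma neg_mul_norm_le_mul_norm_sub_add {q : E × ℝ} (hq : q ∈ S) (v : E) :
    -(μ * ‖v‖) ≤ μ * ‖v - q.1‖ + q.2 := by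
  have htri : ‖q.1‖ ≤ ‖v - q.1‖ + ‖v‖ := by
    simpa [norm_sub_rev] using norm_sub_le_norm_sub_add_norm_sub q.1 v 0
  nlinarith [hS q hq]

lemma neg_mul_norm_le_coneInfConv (v : E) : -(μ * ‖v‖) ≤ coneInfConv μ S v :=
  le_ciInf fun q => neg_mul_norm_le_mul_norm_sub_add hμ hS q.2 v

lemma coneInfConv_le {q : E × ℝ} (hq : q ∈ S) (v : E) :
    coneInfConv μ S v ≤ μ * ‖v - q.1‖ + q.2 :=
  ciInf_le ⟨-(μ * ‖v‖), Set.forall_mem_range.2 fun q =>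
    neg_mul_norm_le_mul_norm_sub_add hμ hS q.2 v⟩ (⟨q, hq⟩ : S)

lemma coneInfConv_smul_le {c : ℝ} (hc : 0 < c) (v : E) :
    coneInfConv μ S (c • v) ≤ c * coneInfConv μ S v := by
  have key (q : S) :
      coneInfConv μ S (c • v) ≤ c * (μ * ‖v - (q : E × ℝ).1‖ + (q : E × ℝ).2) := by
    calc coneInfConv μ S (c • v)
        ≤ μ * ‖c • v - (c • (q : E × ℝ)).1‖ + (c • (q : E × ℝ)).2 :=
          coneInfConv_le hμ hS (S.smul_mem hc.le q.2) _
      _ = c * (μ * ‖v - (q : E × ℝ).1‖ + (q : E × ℝ).2) := by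
          rw [Prod.smul_fst, Prod.smul_snd, ← smul_sub, norm_smul, Real.norm_of_nonneg hc.le,
            smul_eq_mul]
          ring
  exact (le_ciInf key).trans_eq (Real.mul_iInf_of_nonneg hc.le _).symm

lemma coneInfConv_smul {c : ℝ} (hc : 0 < c) (v : E) :
    coneInfConv μ S (c • v) = c * coneInfConv μ S v := by
  refine le_antisymm (coneInfConv_smul_le hμ hS hc v) ?_
  have h := coneInfConv_smul_le hμ hS (inv_pos.2 hc) (c • v)
  rw [inv_smul_smul₀ hc.ne'] at h
  rwa [← le_inv_mul_iff₀ hc]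

lemma coneInfConv_add_le (v w : E) :
    coneInfConv μ S (v + w) ≤ coneInfConv μ S v + coneInfConv μ S w := by
  refine le_ciInf_add_ciInf fun q q' => ?_
  calc coneInfConv μ S (v + w)
      ≤ μ * ‖(v + w) - ((q : E × ℝ) + q').1‖ + ((q : E × ℝ) + q').2 :=
        coneInfConv_le hμ hS (S.add_mem q.2 q'.2) _
    _ ≤ _ := by
        have h : ‖(v + w) - ((q : E × ℝ) + q').1‖
            ≤ ‖v - (q : E × ℝ).1‖ + ‖w - (q' : E × ℝ).1‖ := by
          rw [Prod.fst_add, add_sub_add_comm]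
          exact norm_add_le _ _
        rw [Prod.snd_add]
        nlinarith

theorem exists_strongDual_norm_le_forall_apply_fst_le :
    ∃ g : StrongDual ℝ E, ‖g‖ ≤ μ ∧ ∀ q ∈ S, g q.1 ≤ q.2 := by
  obtain ⟨g, -, hg⟩ := exists_extension_of_le_sublinear (LinearMap.toPMap 0 ⊥)
    (coneInfConv μ S) (fun c hc v => coneInfConv_smul hμ hS hc v) (coneInfConv_add_le hμ hS)
    (by
      rintro ⟨v, hv⟩
      obtain rfl := (Submodule.mem_bot ℝ).1 hv
      simpa using neg_mul_norm_le_coneInfConv hμ hS (0 : E))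
  have hg_le : ∀ v, g v ≤ μ * ‖v‖ := fun v =>
    (hg v).trans (by simpa using coneInfConv_le hμ hS S.zero_mem v)
  have hg_norm : ∀ v, ‖g v‖ ≤ μ * ‖v‖ := fun v =>
    abs_le.2 ⟨neg_le.2 (by simpa using hg_le (-v)), hg_le v⟩
  refine ⟨g.mkContinuous μ hg_norm, LinearMap.mkContinuous_norm_le g hμ hg_norm,
    fun q hq => (hg q.1).trans ?_⟩
  simpa using coneInfConv_le hμ hS hq q.1

end ConeInfConv

lemma nonneg_of_forall_neg_sq_mul_le {a K : ℝ}
    (h : ∀ s, 0 < s → s < 1 → -(s ^ 2 * K) ≤ s * (1 - s) * a) : 0 ≤ a := by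
  by_contra! ha
  set s := min (1 / 2) (-a / (4 * (|K| + 1))) with hs
  have hs0 : 0 < s := lt_min (by norm_num) (div_pos (by linarith) (by positivity))
  have hs1 : s ≤ 1 / 2 := min_le_left _ _
  have hsK : s * (|K| + 1) ≤ -a / 4 := by
    have := min_le_right (1 / 2) (-a / (4 * (|K| + 1)))
    rw [← hs, le_div_iff₀ (by positivity)] at this
    linarith
  have h' := h s hs0 (by linarith)
  have hK : s ^ 2 * K ≤ s * (s * (|K| + 1)) := by nlinarith [le_abs_self K]
  have h1s : s * (1 - s) * a ≤ s * a / 2 := by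
    nlinarith [mul_nonneg (mul_pos hs0 (neg_pos.2 ha)).le (by linarith : (0 : ℝ) ≤ 1 / 2 - s)]
  nlinarith [mul_le_mul_of_nonneg_left hsK hs0.le, mul_neg_of_pos_of_neg hs0 ha]

section DualPairing

variable {E : Type*} [NormedAddCommGroup E] [NormedSpace ℝ E]

lemma abs_apply_le_of_norm_le (f : StrongDual ℝ E) {v : E} {ρ : ℝ} (hv : ‖v‖ ≤ ρ) :
    |f v| ≤ ‖f‖ * ρ :=
  (f.le_opNorm v).trans (mul_le_mul_of_nonneg_left hv (norm_nonneg f))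

lemma sum_mul_apply_sub_eq {ι : Type*} [Fintype ι] {t : ι → ℝ} (x : ι → E)
    (xs : ι → StrongDual ℝ E) (ht : ∑ i, t i = 1) (a : E) (as : StrongDual ℝ E) :
    ∑ i, t i * (as - xs i) (a - x i) = (as - ∑ i, t i • xs i) (a - ∑ i, t i • x i)
      + (∑ i, t i * xs i (x i) - (∑ i, t i • xs i) (∑ i, t i • x i)) := by
  have h (i : ι) : t i * (as - xs i) (a - x i)
      = t i * as a - as (t i • x i) - (t i • xs i) a + t i * xs i (x i) := by
    simp only [sub_apply, map_sub, map_smul, smul_apply, smul_eq_mul]; ring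
  rw [Finset.sum_congr rfl fun i _ => h i, Finset.sum_add_distrib, Finset.sum_sub_distrib,
    Finset.sum_sub_distrib, ← Finset.sum_mul, ht, ← map_sum, ← sum_apply]
  simp only [sub_apply, map_sub]
  ring

/- Write `u = (1 - s) z + s m + e`. Adding `s` times `hwu` and `1 - s` times `hzu`, the terms in
`us` collapse to `us e ≤ 0`, and the remaining error terms are `O(‖e‖) = O(s²)`. -/
lemma neg_sq_mul_le_of_near_segment {z m u : E} {zs w us : StrongDual ℝ E} {r C s : ℝ}
    (hr : 0 ≤ r) (hs0 : 0 ≤ s) (hs1 : s ≤ 1)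
    (hwu : -C ≤ (w - us) (m - u)) (hzu : -(r * ‖z - u‖) ≤ (zs - us) (z - u))
    (hnear : ‖u - ((1 - s) • z + s • m)‖ ≤ s ^ 2) (hus : us (u - ((1 - s) • z + s • m)) ≤ 0) :
    -(s ^ 2 * (r + ‖zs‖ + ‖w‖ + |C|)) ≤
      s * (1 - s) * ((zs - w) (z - m) + C + r * ‖z - m‖) := by
  set e := u - ((1 - s) • z + s • m)
  have hzu_eq : z - u = s • (z - m) - e := by simp only [e]; module
  have hmu_eq : m - u = -((1 - s) • (z - m)) - e := by simp only [e]; module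
  have hnorm : ‖z - u‖ ≤ s * ‖z - m‖ + s ^ 2 := by
    rw [hzu_eq]
    refine (norm_sub_le _ _).trans ?_
    rw [norm_smul, Real.norm_of_nonneg hs0]
    linarith
  have hzu' := (neg_le_neg (mul_le_mul_of_nonneg_left hnorm hr)).trans hzu
  rw [hzu_eq] at hzu'
  rw [hmu_eq] at hwu
  simp only [sub_apply, map_sub, map_neg, map_smul, smul_eq_mul] at hzu' hwu
  simp only [sub_apply, map_sub]
  have hze := abs_le.1 (abs_apply_le_of_norm_le zs hnear)
  have hwe := abs_le.1 (abs_apply_le_of_norm_le w hnear)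
  have hs1' := sub_nonneg.2 hs1
  nlinarith [mul_le_mul_of_nonneg_left hwu hs0, mul_le_mul_of_nonneg_left hzu' hs1',
    mul_le_mul_of_nonneg_left hze.1 hs1', mul_le_mul_of_nonneg_left hwe.1 hs0,
    mul_le_mul_of_nonneg_left (le_abs_self C) (sq_nonneg s),
    mul_nonneg (mul_nonneg hr (sq_nonneg s)) hs0,
    mul_nonneg (mul_nonneg (norm_nonneg zs) (sq_nonneg s)) hs0,
    mul_nonneg (mul_nonneg (norm_nonneg w) (sq_nonneg s)) hs1']

end DualPairing

section MonotoneOperator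

variable {E : Type*} [NormedAddCommGroup E] [NormedSpace ℝ E] {T : E → Set (StrongDual ℝ E)}

lemma exists_graph_near_of_affine_lower_bound
    (hdom : ∀ ε, 0 < ε → ∀ x, (Te T ε x).Nonempty → (T x).Nonempty) {p : E}
    {v : StrongDual ℝ E} {δ c : ℝ}
    (hv : ∀ y ys, ys ∈ T y → -(δ * ‖p - y‖) - c ≤ (v - ys) (p - y)) {ρ : ℝ} (hρ : 0 < ρ) :
    ∃ u us, us ∈ T u ∧ ‖u - p‖ ≤ ρ ∧ us (u - p) ≤ 0 := by
  by_contra! hfar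
  set ε := ‖v‖ + |δ| + |c| / ρ + 1 with hε
  have hvε : v ∈ Te T ε p := by
    intro y ys hys
    have hv_le := (abs_le.1 (abs_apply_le_of_norm_le v (le_refl ‖p - y‖))).1
    have hsplit : (v - ys) (p - y) = v (p - y) + ys (y - p) := by
      simp only [sub_apply, map_sub]; ring
    rcases le_or_gt ‖p - y‖ ρ with hnear | hfar'
    · have := hfar y ys hys (by rwa [norm_sub_rev])
      nlinarith [norm_nonneg (p - y), abs_nonneg δ, div_nonneg (abs_nonneg c) hρ.le]
    · have hc : c ≤ |c| / ρ * ‖p - y‖ := by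
        rw [div_mul_eq_mul_div, le_div_iff₀ hρ]
        nlinarith [le_abs_self c, abs_nonneg c]
      have hδ : δ * ‖p - y‖ ≤ |δ| * ‖p - y‖ :=
        mul_le_mul_of_nonneg_right (le_abs_self δ) (norm_nonneg _)
      nlinarith [hv y ys hys, norm_nonneg (p - y), norm_nonneg v]
  obtain ⟨us, hus⟩ := hdom ε (by positivity) p ⟨v, hvε⟩
  simpa using hfar p us hus (by simpa using hρ.le)

lemma exists_graph_near_segment
    (hdom : ∀ ε, 0 < ε → ∀ x, (Te T ε x).Nonempty → (T x).Nonempty) {r c s ρ : ℝ} {z w : E}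
    {zs ws : StrongDual ℝ E} (hr : 0 ≤ r) (hz : zs ∈ Te T r z) (hw : ws ∈ Tlow T c w)
    (hs0 : 0 ≤ s) (hs1 : s ≤ 1) (hρ : 0 < ρ) :
    ∃ u us, us ∈ T u ∧ ‖u - ((1 - s) • z + s • w)‖ ≤ ρ ∧
      us (u - ((1 - s) • z + s • w)) ≤ 0 := by
  refine exists_graph_near_of_affine_lower_bound hdom (v := (1 - s) • zs + s • ws) (δ := (1 - s) * r)
    (c := (1 - s) * r * (s * ‖z - w‖) + s * c + s * (1 - s) * (zs - ws) (z - w))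
    (fun y ys hys => ?_) hρ
  have hid : ((1 - s) • zs + s • ws - ys) ((1 - s) • z + s • w - y)
      = (1 - s) * (zs - ys) (z - y) + s * (ws - ys) (w - y)
        - s * (1 - s) * (zs - ws) (z - w) := by
    simp only [sub_apply, add_apply, smul_apply, map_sub, map_add, map_smul, smul_eq_mul]
    ring
  have hnorm : ‖z - y‖ ≤ ‖(1 - s) • z + s • w - y‖ + s * ‖z - w‖ := by
    calc ‖z - y‖ = ‖((1 - s) • z + s • w - y) + s • (z - w)‖ := by congr 1; module
      _ ≤ _ := (norm_add_le _ _).trans_eq (by rw [norm_smul, Real.norm_of_nonneg hs0])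
  rw [hid]
  nlinarith [mul_le_mul_of_nonneg_left (hz y ys hys) (sub_nonneg.2 hs1),
    mul_le_mul_of_nonneg_left (hw y ys hys) hs0,
    mul_le_mul_of_nonneg_left hnorm (mul_nonneg (sub_nonneg.2 hs1) hr)]

lemma sum_smul_mem_Tlow (hT : IsMonotoneOp T) {ι : Type*} [Fintype ι] {t : ι → ℝ} {x : ι → E}
    {xs : ι → StrongDual ℝ E} (hx : ∀ i, xs i ∈ T (x i)) (ht0 : ∀ i, 0 ≤ t i)
    (ht : ∑ i, t i = 1) :
    ∑ i, t i • xs i ∈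
      Tlow T (∑ i, t i * xs i (x i) - (∑ i, t i • xs i) (∑ i, t i • x i)) (∑ i, t i • x i) := by
  intro y ys hys
  have hnn : 0 ≤ ∑ i, t i * (ys - xs i) (y - x i) :=
    Finset.sum_nonneg fun i _ => mul_nonneg (ht0 i) (hT hys (hx i))
  rw [sum_mul_apply_sub_eq x xs ht] at hnn
  have hsymm : (∑ i, t i • xs i - ys) (∑ i, t i • x i - y)
      = (ys - ∑ i, t i • xs i) (y - ∑ i, t i • x i) := by
    simp only [sub_apply, map_sub]; ring
  linarith

theorem neg_mul_norm_le_sum_of_mem_Te (hT : IsMonotoneOp T)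
    (hdom : ∀ ε, 0 < ε → ∀ x, (Te T ε x).Nonempty → (T x).Nonempty) {r : ℝ} {z : E}
    {zs : StrongDual ℝ E} (hr : 0 ≤ r) (hz : zs ∈ Te T r z) {ι : Type*} [Fintype ι]
    {t : ι → ℝ} {x : ι → E} {xs : ι → StrongDual ℝ E} (hx : ∀ i, xs i ∈ T (x i))
    (ht0 : ∀ i, 0 ≤ t i) (ht : ∑ i, t i = 1) :
    -(r * ‖∑ i, t i • (z - x i)‖) ≤ ∑ i, t i * (zs - xs i) (z - x i) := by
  have hw := sum_smul_mem_Tlow hT hx ht0 ht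
  set m := ∑ i, t i • x i
  set w := ∑ i, t i • xs i
  set C := ∑ i, t i * xs i (x i) - w m
  have hm : ∑ i, t i • (z - x i) = z - m := by
    simp only [smul_sub, Finset.sum_sub_distrib, ← Finset.sum_smul, ht, one_smul, m]
  rw [hm, sum_mul_apply_sub_eq x xs ht]
  suffices h : 0 ≤ (zs - w) (z - m) + C + r * ‖z - m‖ by linarith
  refine nonneg_of_forall_neg_sq_mul_le (K := r + ‖zs‖ + ‖w‖ + |C|) fun s hs0 hs1 => ?_
  obtain ⟨u, us, hus, hnear, hus_le⟩ :=
    exists_graph_near_segment hdom hr hz hw hs0.le hs1.le (pow_pos hs0 2)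
  exact neg_sq_mul_le_of_near_segment hr hs0.le hs1.le (hw u us hus) (hz u us hus) hnear hus_le

def graphPairing (T : E → Set (StrongDual ℝ E)) (z : E) (zs : StrongDual ℝ E) : Set (E × ℝ) :=
  {q | ∃ y ys, ys ∈ T y ∧ (z - y, (zs - ys) (z - y)) = q}

lemma neg_mul_norm_le_of_mem_hull (hT : IsMonotoneOp T)
    (hdom : ∀ ε, 0 < ε → ∀ x, (Te T ε x).Nonempty → (T x).Nonempty) {r : ℝ} {z : E}
    {zs : StrongDual ℝ E} (hr : 0 ≤ r) (hz : zs ∈ Te T r z) {q : E × ℝ}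
    (hq : q ∈ PointedCone.hull ℝ (graphPairing T z zs)) : -(r * ‖q.1‖) ≤ q.2 := by
  obtain ⟨n, c, g, rfl⟩ := Submodule.mem_span_set'.1 hq
  choose y ys hys hg using fun i => (g i).2
  have hq : ∑ i, c i • (g i : E × ℝ)
      = (∑ i, (c i : ℝ) • (z - y i), ∑ i, (c i : ℝ) * (zs - ys i) (z - y i)) := by
    simp only [← hg, ← Nonneg.coe_smul, Prod.smul_mk, smul_eq_mul]
    ext <;> simp only [Prod.fst_sum, Prod.snd_sum]
  rw [hq]
  dsimp only
  have ha0 : (0 : ℝ) ≤ ∑ i, (c i : ℝ) := Finset.sum_nonneg fun i _ => (c i).2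
  rcases ha0.eq_or_lt with ha | ha
  · have hc i : (c i : ℝ) = 0 :=
      (Finset.sum_eq_zero_iff_of_nonneg fun i _ => (c i).2).1 ha.symm i (Finset.mem_univ i)
    simp [hc]
  have key := neg_mul_norm_le_sum_of_mem_Te hT hdom hr hz
    (t := fun i => (∑ j, (c j : ℝ))⁻¹ * c i) hys (fun i => mul_nonneg (inv_nonneg.2 ha.le) (c i).2)
    (by rw [← Finset.mul_sum, inv_mul_cancel₀ ha.ne'])
  simp only [mul_smul, ← Finset.smul_sum, norm_smul, norm_inv, Real.norm_of_nonneg ha.le,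
    mul_assoc, ← Finset.mul_sum] at key
  refine le_of_mul_le_mul_left ?_ (inv_pos.2 ha)
  linarith

theorem exists_mem_norm_sub_le_of_mem_Te (hT : IsMaxMonotoneOp T)
    (hdom : ∀ ε, 0 < ε → ∀ x, (Te T ε x).Nonempty → (T x).Nonempty) {r : ℝ} {z : E}
    {zs : StrongDual ℝ E} (hr : 0 ≤ r) (hz : zs ∈ Te T r z) : ∃ us ∈ T z, ‖us - zs‖ ≤ r := by
  obtain ⟨g, hg, hgS⟩ := exists_strongDual_norm_le_forall_apply_fst_le hr
    (S := PointedCone.hull ℝ (graphPairing T z zs))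
    fun q hq => neg_mul_norm_le_of_mem_hull hT.1 hdom hr hz hq
  refine ⟨zs - g, hT.2 z _ fun y ys hys => ?_, by simpa using hg⟩
  have := hgS _ (PointedCone.subset_hull ⟨y, ys, hys, rfl⟩)
  simp only [sub_apply] at this ⊢
  linarith

lemma Lnum_le_dnum (hT : IsMonotoneOp T) (x : E) (xs : StrongDual ℝ E) :
    Lnum T x xs ≤ dnum T x xs := by
  refine le_iInf₂ fun us hus => iSup₂_le fun y ys => iSup₂_le fun hys hne =>
    ENNReal.ofReal_le_ofReal ?_
  rw [div_le_iff₀ (norm_pos_iff.2 (sub_ne_zero.2 hne.symm))]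
  have hsplit : (xs - ys) (y - x) = (xs - us) (y - x) - (us - ys) (x - y) := by
    simp only [sub_apply, map_sub]; ring
  have hbound : (xs - us) (y - x) ≤ ‖us - xs‖ * ‖x - y‖ := by
    rw [norm_sub_rev us, norm_sub_rev x]
    exact (le_abs_self _).trans (abs_apply_le_of_norm_le (xs - us) le_rfl)
  linarith [hT hus hys]

lemma mem_Te_toReal_Lnum {x : E} {xs : StrongDual ℝ E} (h : Lnum T x xs ≠ ⊤) :
    xs ∈ Te T (Lnum T x xs).toReal x := by
  intro y ys hys
  rcases eq_or_ne y x with rfl | hne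
  · simp
  have hle : ENNReal.ofReal ((xs - ys) (y - x) / ‖x - y‖) ≤ Lnum T x xs :=
    le_iSup₂_of_le y ys (le_iSup₂_of_le (f := fun _ _ => _) hys hne le_rfl)
  rw [← ENNReal.ofReal_toReal h, ENNReal.ofReal_le_ofReal_iff ENNReal.toReal_nonneg,
    div_le_iff₀ (norm_pos_iff.2 (sub_ne_zero.2 hne.symm))] at hle
  have hneg : (xs - ys) (x - y) = -(xs - ys) (y - x) := by rw [← map_neg, neg_sub]
  linarith

end MonotoneOperator

theorem stmt15 (T : X → Set (StrongDual ℝ X)) (hT : IsMaxMonotoneOp T)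
    (hdom : ∀ ε : ℝ, 0 < ε → {x : X | (Te T ε x).Nonempty} = {x : X | (T x).Nonempty}) :
    IsRegularOp T := by
  have hdom' : ∀ ε, 0 < ε → ∀ x, (Te T ε x).Nonempty → (T x).Nonempty :=
    fun ε hε x hx => (hdom ε hε).subset hx
  intro x xs
  refine le_antisymm (Lnum_le_dnum hT.1 x xs) ?_
  by_cases hL : Lnum T x xs = ⊤
  · simp [hL]
  obtain ⟨us, hus, hle⟩ :=
    exists_mem_norm_sub_le_of_mem_Te hT hdom' ENNReal.toReal_nonneg (mem_Te_toReal_Lnum hL)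
  calc dnum T x xs ≤ ENNReal.ofReal ‖us - xs‖ := iInf₂_le us hus
    _ ≤ ENNReal.ofReal (Lnum T x xs).toReal := ENNReal.ofReal_le_ofReal hle
    _ = Lnum T x xs := ENNReal.ofReal_toReal hL
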